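/- Let k ≥ 1 and let ψ⁻ = (|01⟩ − |10⟩)/√2 ∈ ℂ² ⊗ ℂ² be the singlet state. There is no positive semidefinite matrix ρ on ℂ² ⊗ ℂ² ⊗ ℂ^k with trace 1 such that both the partial trace of ρ over the third tensor factor equals |ψ⁻⟩⟨ψ⁻| and the partial trace of ρ over the second tensor factor equals |ψ⁻⟩⟨ψ⁻|. -/

import Mathlib

open scoped Matrix ComplexOrder

/-!
The `(0, 0)` and the `(1, c)`, `c ≠ 0`, diagonal entries of `tr₂ ρ = |ψ⁻⟩⟨ψ⁻|` vanish. As sums of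
nonnegative diagonal entries of `ρ`, they force `ρ (0,1,0) (0,1,0) = 0` and `ρ (1,0,c) (1,0,c) = 0`
for `c ≠ 0`, and a vanishing diagonal entry of a positive semidefinite matrix kills its row and
column (a `2 × 2` principal minor). So every term of `(tr₃ ρ) (0,1) (1,0) = ∑ c, ρ (0,1,c) (1,0,c)`
vanishes, whereas this entry of `|ψ⁻⟩⟨ψ⁻|` is `-1/2`.
-/

/-- The singlet state `ψ⁻ = (|01⟩ - |10⟩)/√2` as a vector in `ℂ² ⊗ ℂ²`. -/
noncomputable def singletVec : Fin 2 × Fin 2 → ℂ := fun p =>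
  if p = (0, 1) then ((Real.sqrt 2 : ℝ)⁻¹ : ℂ)
  else if p = (1, 0) then -((Real.sqrt 2 : ℝ)⁻¹ : ℂ) else 0

/-- The rank-one projection `|ψ⁻⟩⟨ψ⁻|` onto the singlet. -/
noncomputable def singletMat : Matrix (Fin 2 × Fin 2) (Fin 2 × Fin 2) ℂ :=
  Matrix.vecMulVec singletVec (star singletVec)

/-- The singlet vector viewed inside `ℂ² ⊗ ℂ^k` (via the first two basis vectors of `ℂ^k`). -/
noncomputable def singletVecK (k : ℕ) : Fin 2 × Fin k → ℂ := fun p =>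
  if h : (p.2 : ℕ) < 2 then singletVec (p.1, ⟨(p.2 : ℕ), h⟩) else 0

/-- The rank-one projection onto the singlet inside `ℂ² ⊗ ℂ^k`. -/
noncomputable def singletMatK (k : ℕ) : Matrix (Fin 2 × Fin k) (Fin 2 × Fin k) ℂ :=
  Matrix.vecMulVec (singletVecK k) (star (singletVecK k))

namespace Matrix.PosSemidef
variable {𝕜 n : Type*} [RCLike 𝕜] {M : Matrix n n 𝕜}

lemma apply_eq_zero_of_diag_eq_zero_left (hM : M.PosSemidef) {i : n} (hi : M i i = 0) (j : n) :
    M i j = 0 := by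
  classical
  have h := (hM.submatrix ![i, j]).det_nonneg
  simp only [det_fin_two, submatrix_apply, cons_val_zero, cons_val_one, hi, zero_mul, zero_sub,
    ← hM.isHermitian.apply j i, RCLike.star_def, RCLike.mul_conj] at h
  have : ‖M i j‖ ^ 2 ≤ 0 := by exact_mod_cast neg_nonneg.1 h
  simpa using this

lemma apply_eq_zero_of_diag_eq_zero_right (hM : M.PosSemidef) {j : n} (hj : M j j = 0) (i : n) :
    M i j = 0 := by
  rw [← hM.isHermitian.apply, hM.apply_eq_zero_of_diag_eq_zero_left hj, star_zero]

end Matrix.PosSemidef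

lemma singletMat_apply_01_10 : singletMat (0, 1) (1, 0) = -(1 / 2) := by
  simp [singletMat, singletVec, Matrix.vecMulVec_apply, ← mul_inv, ← Complex.ofReal_mul]

lemma singletVecK_eq_zero {k : ℕ} {a : Fin 2} {c : Fin k} (h01 : ¬(a = 0 ∧ (c : ℕ) = 1))
    (h10 : ¬(a = 1 ∧ (c : ℕ) = 0)) : singletVecK k (a, c) = 0 := by
  unfold singletVecK singletVec
  split_ifs with hc h₁ h₂
  · simp only [Prod.mk.injEq, Fin.ext_iff] at h₁
    exact absurd ⟨Fin.ext h₁.1, h₁.2⟩ h01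
  · simp only [Prod.mk.injEq, Fin.ext_iff] at h₂
    exact absurd ⟨Fin.ext h₂.1, h₂.2⟩ h10
  all_goals rfl

theorem stmt15_general {k : ℕ} :
    ¬ ∃ ρ : Matrix (Fin 2 × Fin 2 × Fin k) (Fin 2 × Fin 2 × Fin k) ℂ,
      ρ.PosSemidef ∧ ρ.trace = 1 ∧
      (Matrix.of fun p q : Fin 2 × Fin 2 =>
        ∑ c : Fin k, ρ (p.1, p.2, c) (q.1, q.2, c)) = singletMat ∧
      (Matrix.of fun p q : Fin 2 × Fin k =>
        ∑ b : Fin 2, ρ (p.1, b, p.2) (q.1, b, q.2)) = singletMatK k := by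
  rintro ⟨ρ, hρ, -, h₃, h₂⟩
  have hdiag : ∀ a c, singletVecK k (a, c) = 0 → ∀ b, ρ (a, b, c) (a, b, c) = 0 := by
    intro a c hv b
    have h := Matrix.ext_iff.2 h₂ (a, c) (a, c)
    simp only [Matrix.of_apply, singletMatK, Matrix.vecMulVec_apply, hv, zero_mul] at h
    exact (Finset.sum_eq_zero_iff_of_nonneg fun _ _ => hρ.diag_nonneg).1 h b (Finset.mem_univ b)
  have hterm : ∀ c, ρ (0, 1, c) (1, 0, c) = 0 := by
    intro c
    rcases eq_or_ne (c : ℕ) 0 with hc | hc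
    · have hv : singletVecK k (0, c) = 0 := singletVecK_eq_zero (by simp [hc]) (by simp)
      exact hρ.apply_eq_zero_of_diag_eq_zero_left (hdiag 0 c hv 1) _
    · have hv : singletVecK k (1, c) = 0 := singletVecK_eq_zero (by simp) (by simp [hc])
      exact hρ.apply_eq_zero_of_diag_eq_zero_right (hdiag 1 c hv 0) _
  have h := Matrix.ext_iff.2 h₃ (0, 1) (1, 0)
  simp only [Matrix.of_apply, hterm, Finset.sum_const_zero, singletMat_apply_01_10] at h
  norm_num at h

theorem stmt15 {k : ℕ} (hk : 1 ≤ k) :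
    ¬ ∃ ρ : Matrix (Fin 2 × Fin 2 × Fin k) (Fin 2 × Fin 2 × Fin k) ℂ,
      ρ.PosSemidef ∧ ρ.trace = 1 ∧
      (Matrix.of fun p q : Fin 2 × Fin 2 =>
        ∑ c : Fin k, ρ (p.1, p.2, c) (q.1, q.2, c)) = singletMat ∧
      (Matrix.of fun p q : Fin 2 × Fin k =>
        ∑ b : Fin 2, ρ (p.1, b, p.2) (q.1, b, q.2)) = singletMatK k :=
  stmt15_general
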